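/- (Lemma 4, restated in the quantization level k.) For an integer k ≥ 2 set δ_k = 2·C_q/(k−1) and ε_∞(k) = log( δ_k / ∫_{C_q−δ_k}^{C_q} f_{−C_q/2}(t)·(t−(C_q−δ_k)) dt ), where f_{−C_q/2} is the density of N(−C_q/2, σ²). Then ε_∞ increases monotonically with k: for all integers 2 ≤ k₁ < k₂, ε_∞(k₁) < ε_∞(k₂). -/

import Mathlib

open MeasureTheory Real

/-- Density of the normal distribution `N(x, σ²)`. -/
noncomputable def gpdf (σ x t : ℝ) : ℝ :=
  (1 / (σ * Real.sqrt (2 * Real.pi))) * Real.exp (-(t - x) ^ 2 / (2 * σ ^ 2))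

/-- Quantization levels `B(r) = -C_q + r · δ`, with `δ = 2·C_q/(k-1)`. -/
noncomputable def Blev (Cq : ℝ) (k : ℕ) (r : ℕ) : ℝ :=
  -Cq + (r : ℝ) * (2 * Cq / ((k : ℝ) - 1))

/-- The quantized-Gaussian pmf `P_x(r)` on `{0, 1, …, k-1}`. -/
noncomputable def qgPmf (Cq σ : ℝ) (k : ℕ) (x : ℝ) (r : ℕ) : ℝ :=
  if r = 0 then
    (∫ t in Set.Iic (Blev Cq k 0), gpdf σ x t)
      + ∫ t in (Blev Cq k 0)..(Blev Cq k 1),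
          gpdf σ x t * (Blev Cq k 1 - t) / (2 * Cq / ((k : ℝ) - 1))
  else if r = k - 1 then
    (∫ t in (Blev Cq k (k - 2))..(Blev Cq k (k - 1)),
        gpdf σ x t * (t - Blev Cq k (k - 2)) / (2 * Cq / ((k : ℝ) - 1)))
      + ∫ t in Set.Ici (Blev Cq k (k - 1)), gpdf σ x t
  else
    (∫ t in (Blev Cq k (r - 1))..(Blev Cq k r),
        gpdf σ x t * (t - Blev Cq k (r - 1)) / (2 * Cq / ((k : ℝ) - 1)))
      + ∫ t in (Blev Cq k r)..(Blev Cq k (r + 1)),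
          gpdf σ x t * (Blev Cq k (r + 1) - t) / (2 * Cq / ((k : ℝ) - 1))

/-!
Write `I(δ) = ∫_{C_q-δ}^{C_q} f(t)·(t-(C_q-δ)) dt` for the Gaussian density `f`, so that
`ε_∞(k) = log (δ_k / I(δ_k))` and `δ_k` decreases in `k`. Since `(t-(c-δ))/δ = 1 - (c-t)/δ`
grows with `δ` for `t ≤ c`, and enlarging `δ` also adds positive mass on the left, the
average `I(δ)/δ` is strictly increasing in `δ`; hence `δ_k / I(δ_k)` increases in `k`.
-/

open Set

lemma gpdf_pos {σ : ℝ} (hσ : 0 < σ) (x t : ℝ) : 0 < gpdf σ x t := by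
  unfold gpdf
  have := pi_pos
  positivity

lemma continuous_gpdf (σ x : ℝ) : Continuous (gpdf σ x) := by
  unfold gpdf
  fun_prop

noncomputable def rampIntegral (f : ℝ → ℝ) (c δ : ℝ) : ℝ :=
  ∫ t in (c - δ)..c, f t * (t - (c - δ))

section Ramp

variable {f : ℝ → ℝ} {c : ℝ}

lemma rampIntegral_pos (hf : Continuous f) (hpos : ∀ t, 0 < f t) {δ : ℝ} (hδ : 0 < δ) :
    0 < rampIntegral f c δ := by
  apply intervalIntegral.integral_pos (by linarith) (by fun_prop)
  · intro t ht
    exact mul_nonneg (hpos t).le (by linarith [ht.1])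
  · exact ⟨c, ⟨by linarith, le_rfl⟩, mul_pos (hpos c) (by linarith)⟩

lemma strictMonoOn_rampIntegral_div (hf : Continuous f) (hpos : ∀ t, 0 < f t) :
    StrictMonoOn (fun δ => rampIntegral f c δ / δ) (Ioi 0) := by
  intro δ₂ (h₂ : 0 < δ₂) δ₁ (h₁ : 0 < δ₁) h₂₁
  have hcont : ∀ δ d : ℝ, Continuous fun t => f t * (t - d) / δ := fun _ _ => by fun_prop
  simp only [rampIntegral, ← intervalIntegral.integral_div]
  have hsplit := intervalIntegral.integral_add_adjacent_intervals (b := c - δ₂) (c := c)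
    ((hcont δ₁ (c - δ₁)).intervalIntegrable (μ := volume) (c - δ₁) _)
    ((hcont δ₁ (c - δ₁)).intervalIntegrable _ _)
  have hleft : 0 ≤ ∫ t in (c - δ₁)..(c - δ₂), f t * (t - (c - δ₁)) / δ₁ := by
    refine intervalIntegral.integral_nonneg (by linarith) fun t ht => ?_
    exact div_nonneg (mul_nonneg (hpos t).le (by linarith [ht.1])) h₁.le
  have hright : ∫ t in (c - δ₂)..c, f t * (t - (c - δ₂)) / δ₂
      < ∫ t in (c - δ₂)..c, f t * (t - (c - δ₁)) / δ₁ := by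
    apply intervalIntegral.integral_lt_integral_of_continuousOn_of_le_of_exists_lt
      (by linarith) (hcont _ _).continuousOn (hcont _ _).continuousOn
    · intro t ht
      rw [div_le_div_iff₀ h₂ h₁]
      nlinarith [mul_nonneg (mul_nonneg (hpos t).le (sub_nonneg.2 ht.2)) (sub_nonneg.2 h₂₁.le)]
    · refine ⟨c - δ₂, ⟨le_rfl, by linarith⟩, ?_⟩
      rw [sub_self, mul_zero, zero_div]
      exact div_pos (mul_pos (hpos _) (by linarith)) h₁
  linarith

end Ramp

/-- Lemma 4, restated in the quantization level `k`: with `δ_k = 2·C_q/(k-1)`, the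
privacy budget `ε_∞(k) = log(δ_k / ∫_{C_q-δ_k}^{C_q} f_{-C_q/2}(t)·(t-(C_q-δ_k)) dt)`
increases monotonically with `k`. -/
theorem eps_infty_strictMono (Cq σ : ℝ) (hC : 0 < Cq) (hσ : 0 < σ)
    (k₁ k₂ : ℕ) (hk₁ : 2 ≤ k₁) (hk : k₁ < k₂) :
    Real.log ((2 * Cq / ((k₁ : ℝ) - 1)) /
        ∫ t in (Cq - 2 * Cq / ((k₁ : ℝ) - 1))..Cq,
          gpdf σ (-(Cq / 2)) t * (t - (Cq - 2 * Cq / ((k₁ : ℝ) - 1))))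
      < Real.log ((2 * Cq / ((k₂ : ℝ) - 1)) /
          ∫ t in (Cq - 2 * Cq / ((k₂ : ℝ) - 1))..Cq,
            gpdf σ (-(Cq / 2)) t * (t - (Cq - 2 * Cq / ((k₂ : ℝ) - 1)))) := by
  have hk₁' : (2 : ℝ) ≤ k₁ := by exact_mod_cast hk₁
  have hk' : (k₁ : ℝ) < k₂ := by exact_mod_cast hk
  set δ₁ := 2 * Cq / ((k₁ : ℝ) - 1)
  set δ₂ := 2 * Cq / ((k₂ : ℝ) - 1)
  set f := gpdf σ (-(Cq / 2))
  have hδ₂ : 0 < δ₂ := div_pos (by linarith) (by linarith)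
  have hδ : δ₂ < δ₁ := div_lt_div_of_pos_left (by linarith) (by linarith) (by linarith)
  have hδ₁ : 0 < δ₁ := hδ₂.trans hδ
  have hf : Continuous f := continuous_gpdf σ _
  have hpos : ∀ t, 0 < f t := gpdf_pos hσ _
  change log (δ₁ / rampIntegral f Cq δ₁) < log (δ₂ / rampIntegral f Cq δ₂)
  have hI₁ := rampIntegral_pos (c := Cq) hf hpos hδ₁
  have hI₂ := rampIntegral_pos (c := Cq) hf hpos hδ₂
  apply log_lt_log (div_pos hδ₁ hI₁)
  rw [← inv_div (rampIntegral f Cq δ₁), ← inv_div (rampIntegral f Cq δ₂),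
    inv_lt_inv₀ (div_pos hI₁ hδ₁) (div_pos hI₂ hδ₂)]
  exact strictMonoOn_rampIntegral_div hf hpos hδ₂ hδ₁ hδ
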